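/- For every t ∈ [0,T] one has ∫_{ℝⁿ} y(x,t)² + |∇ₓ y(x,t)|² dx ≤ C(T)² · ∫_{ℝⁿ} |∇f(x)|² dx, where C(T)² = 1 + (2/C₀²) · max{1, c_max² T²}. -/

import Mathlib

/-!
The energy `E(t) = ∫ c⁻² (∂ₜy)² + |∇ₓy|²` is conserved: differentiating under the integral sign
and using the wave equation, `E'(t) = 2 ∫ ∂ₜy Δy + 2 ∑ᵢ ∫ ∂ᵢy ∂ₜ∂ᵢy`, and an integration by parts
in each `xᵢ` makes the two terms cancel. As `∂ₜy(·, 0) = 0`, `E ≡ ∫ |∇f|²`, which bounds both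
`∫ |∇ₓy(t)|²` and `∫ (∂ₜy)² ≤ c_max² ∫ |∇f|²`. Writing `y(t) - f = ∫₀ᵗ ∂ₜy`, Cauchy–Schwarz in time
and Fubini give `∫ (y(t) - f)² ≤ T² c_max² ∫ |∇f|²`, hence
`∫ y(t)² ≤ 2 ∫ f² + 2 T² c_max² ∫ |∇f|²`; finally the Poincaré-type inequality bounds `∫ f²` by
`(C₀⁻² - 1) ∫ |∇f|²`.
-/

open MeasureTheory

/-- Sum of the second partial derivatives (spatial Laplacian) of `u` at `x`. -/
noncomputable def spatialLaplacian {n : ℕ} (u : EuclideanSpace ℝ (Fin n) → ℝ)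
    (x : EuclideanSpace ℝ (Fin n)) : ℝ :=
  ∑ i : Fin n,
    fderiv ℝ (fun z => fderiv ℝ u z (EuclideanSpace.single i 1)) x (EuclideanSpace.single i 1)

open Set Function Filter Topology

noncomputable section PartialDerivatives

variable {E F : Type*} [NormedAddCommGroup E] [NormedSpace ℝ E]
  [NormedAddCommGroup F] [NormedSpace ℝ F]

def timeDeriv (y : E → ℝ → F) : E → ℝ → F := fun x t => deriv (y x) t

def spaceDeriv (y : E → ℝ → F) (v : E) : E → ℝ → F :=
  fun x t => fderiv ℝ (fun x' => y x' t) x v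

variable {y : E → ℝ → F}

theorem hasDerivAt_timeDeriv (hy : Differentiable ℝ (uncurry y)) (x : E) (t : ℝ) :
    HasDerivAt (y x) (timeDeriv y x t) t :=
  ((hy (x, t)).comp t ((differentiableAt_const x).prodMk differentiableAt_id)).hasDerivAt

theorem timeDeriv_eq_fderiv_uncurry (hy : Differentiable ℝ (uncurry y)) (x : E) (t : ℝ) :
    timeDeriv y x t = fderiv ℝ (uncurry y) (x, t) (0, 1) :=
  ((hy (x, t)).hasFDerivAt.comp_hasDerivAt t
    ((hasDerivAt_const t x).prodMk (hasDerivAt_id t))).deriv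

theorem spaceDeriv_eq_fderiv_uncurry (hy : Differentiable ℝ (uncurry y)) (v x : E) (t : ℝ) :
    spaceDeriv y v x t = fderiv ℝ (uncurry y) (x, t) (v, 0) := by
  have h : HasFDerivAt (fun x' => y x' t)
      ((fderiv ℝ (uncurry y) (x, t)).comp (ContinuousLinearMap.inl ℝ E ℝ)) x :=
    by exact (hy (x, t)).hasFDerivAt.comp x (hasFDerivAt_prodMk_left (𝕜 := ℝ) x t)
  rw [spaceDeriv, h.fderiv]
  rfl

theorem uncurry_timeDeriv (hy : Differentiable ℝ (uncurry y)) :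
    uncurry (timeDeriv y) = fun p => fderiv ℝ (uncurry y) p (0, 1) :=
  funext fun p => timeDeriv_eq_fderiv_uncurry hy p.1 p.2

theorem uncurry_spaceDeriv (hy : Differentiable ℝ (uncurry y)) (v : E) :
    uncurry (spaceDeriv y v) = fun p => fderiv ℝ (uncurry y) p (v, 0) :=
  funext fun p => spaceDeriv_eq_fderiv_uncurry hy v p.1 p.2

theorem ContDiff.uncurry_timeDeriv {m : WithTop ℕ∞} (hy : ContDiff ℝ (m + 1) (uncurry y)) :
    ContDiff ℝ m (uncurry (timeDeriv y)) := by
  rw [_root_.uncurry_timeDeriv (hy.differentiable (by simp))]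
  exact (hy.fderiv_right le_rfl).clm_apply contDiff_const

theorem ContDiff.uncurry_spaceDeriv {m : WithTop ℕ∞} (hy : ContDiff ℝ (m + 1) (uncurry y))
    (v : E) : ContDiff ℝ m (uncurry (spaceDeriv y v)) := by
  rw [_root_.uncurry_spaceDeriv (hy.differentiable (by simp))]
  exact (hy.fderiv_right le_rfl).clm_apply contDiff_const

theorem timeDeriv_spaceDeriv_comm (hy : ContDiff ℝ 2 (uncurry y)) (v : E) :
    timeDeriv (spaceDeriv y v) = spaceDeriv (timeDeriv y) v := by
  have hy1 : Differentiable ℝ (uncurry y) := hy.differentiable two_ne_zero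
  have hD : Differentiable ℝ (fderiv ℝ (uncurry y)) :=
    (hy.fderiv_right (m := 1) le_rfl).differentiable one_ne_zero
  have hv : Differentiable ℝ (uncurry (spaceDeriv y v)) := by
    rw [uncurry_spaceDeriv hy1]; fun_prop
  have ht : Differentiable ℝ (uncurry (timeDeriv y)) := by
    rw [uncurry_timeDeriv hy1]; fun_prop
  ext x t
  rw [← uncurry_apply_pair (timeDeriv _), uncurry_timeDeriv hv, uncurry_spaceDeriv hy1,
    ← uncurry_apply_pair (spaceDeriv _ v), uncurry_spaceDeriv ht, uncurry_timeDeriv hy1]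
  simp only [fderiv_clm_apply (hD _) (differentiableAt_const _), fderiv_fun_const,
    Pi.zero_apply, ContinuousLinearMap.comp_zero, zero_add, ContinuousLinearMap.flip_apply]
  exact hy.contDiffAt.isSymmSndFDerivAt (by simp) _ _

end PartialDerivatives

theorem timeDeriv_sq {E : Type*} [NormedAddCommGroup E] [NormedSpace ℝ E] {u : E → ℝ → ℝ}
    (hu : Differentiable ℝ (uncurry u)) (x : E) (t : ℝ) :
    timeDeriv (fun x t => u x t ^ 2) x t = 2 * (u x t * timeDeriv u x t) := by
  have h : HasDerivAt (fun s => u x s ^ 2) _ t := (hasDerivAt_timeDeriv hu x t).pow 2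
  rw [timeDeriv, h.deriv]
  ring

section Support

def SpatiallySupportedIn {E F : Type*} [Zero F] (y : E → ℝ → F) (K : Set E) (s : Set ℝ) :
    Prop :=
  ∀ x ∉ K, ∀ t ∈ s, y x t = 0

theorem SpatiallySupportedIn.pow {E : Type*} {u : E → ℝ → ℝ} {K : Set E} {s : Set ℝ}
    (h : SpatiallySupportedIn u K s) {k : ℕ} (hk : k ≠ 0) :
    SpatiallySupportedIn (fun x t => u x t ^ k) K s := fun x hx t ht => by
  simp [h x hx t ht, hk]

theorem SpatiallySupportedIn.hasCompactSupport {E : Type*} [TopologicalSpace E] [T2Space E]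
    {y : E → ℝ → ℝ} {K : Set E} {s : Set ℝ} (h : SpatiallySupportedIn y K s) (hK : IsCompact K)
    {t : ℝ} (ht : t ∈ s) : HasCompactSupport (fun x => y x t) :=
  HasCompactSupport.intro hK fun x hx => h x hx t ht

theorem SpatiallySupportedIn.norm_mul_le_indicator {E : Type*} {G : E → ℝ → ℝ} {K : Set E}
    {s : Set ℝ} (hGK : SpatiallySupportedIn G K s) {M : ℝ}
    (hM : ∀ p ∈ K ×ˢ s, ‖uncurry G p‖ ≤ M) {w : E → ℝ} {C : ℝ} (hwC : ∀ x, ‖w x‖ ≤ C) {t : ℝ}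
    (ht : t ∈ s) (x : E) :
    ‖w x * G x t‖ ≤ K.indicator (fun _ => C * M) x := by
  by_cases hx : x ∈ K
  · rw [indicator_of_mem hx, norm_mul]
    exact mul_le_mul (hwC x) (hM (x, t) ⟨hx, ht⟩) (norm_nonneg _) ((norm_nonneg _).trans (hwC x))
  · simp [indicator_of_notMem hx, hGK x hx t ht]

variable {E F : Type*} [NormedAddCommGroup E] [NormedSpace ℝ E]
  [NormedAddCommGroup F] [NormedSpace ℝ F] {y : E → ℝ → F} {K : Set E} {a b : ℝ}

theorem SpatiallySupportedIn.fderiv_uncurry_eq_zero (h : SpatiallySupportedIn y K (Icc a b))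
    (hy : ContDiff ℝ 1 (uncurry y)) (hK : IsClosed K) (hab : a < b) :
    EqOn (fderiv ℝ (uncurry y)) 0 (Kᶜ ×ˢ Icc a b) := by
  have hU : IsOpen (Kᶜ ×ˢ Ioo a b) := hK.isOpen_compl.prod isOpen_Ioo
  have hzero : EqOn (fderiv ℝ (uncurry y)) 0 (Kᶜ ×ˢ Ioo a b) := fun p hp => by
    have hev : uncurry y =ᶠ[𝓝 p] fun _ => 0 :=
      eventually_of_mem (hU.mem_nhds hp) fun q hq => h q.1 hq.1 q.2 (Ioo_subset_Icc_self hq.2)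
    simp [hev.fderiv_eq]
  refine hzero.of_subset_closure (hy.continuous_fderiv one_ne_zero).continuousOn
    continuousOn_const (prod_mono subset_rfl Ioo_subset_Icc_self) ?_
  rw [closure_prod_eq, closure_Ioo hab.ne]
  exact prod_mono subset_closure subset_rfl

theorem SpatiallySupportedIn.timeDeriv (h : SpatiallySupportedIn y K (Icc a b))
    (hy : ContDiff ℝ 1 (uncurry y)) (hK : IsClosed K) (hab : a < b) :
    SpatiallySupportedIn (_root_.timeDeriv y) K (Icc a b) := fun x hx t ht => by
  rw [timeDeriv_eq_fderiv_uncurry (hy.differentiable one_ne_zero),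
    h.fderiv_uncurry_eq_zero hy hK hab (mk_mem_prod hx ht)]
  rfl

theorem SpatiallySupportedIn.spaceDeriv (h : SpatiallySupportedIn y K (Icc a b))
    (hy : ContDiff ℝ 1 (uncurry y)) (hK : IsClosed K) (hab : a < b) (v : E) :
    SpatiallySupportedIn (_root_.spaceDeriv y v) K (Icc a b) := fun x hx t ht => by
  rw [spaceDeriv_eq_fderiv_uncurry (hy.differentiable one_ne_zero),
    h.fderiv_uncurry_eq_zero hy hK hab (mk_mem_prod hx ht)]
  rfl

end Support

section Integrals

variable {α : Type*} [MeasurableSpace α] {μ : Measure α}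

theorem sq_integral_le_measureReal_mul_integral_sq [IsFiniteMeasure μ] {h : α → ℝ}
    (hi : Integrable h μ) (hi2 : Integrable (fun x => h x ^ 2) μ) :
    (∫ x, h x ∂μ) ^ 2 ≤ μ.real univ * ∫ x, h x ^ 2 ∂μ := by
  set m := μ.real univ
  set a := ∫ x, h x ∂μ
  rcases eq_zero_or_neZero μ with rfl | hμ
  · simp [a]
  have hm : 0 < m := measureReal_univ_pos
  -- `0 ≤ ∫ (m h - a)² = m (m ∫ h² - a²)`
  have h0 : 0 ≤ ∫ x, (m * h x - a) ^ 2 ∂μ := integral_nonneg fun x => sq_nonneg _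
  have hexp : ∫ x, (m * h x - a) ^ 2 ∂μ = m * (m * ∫ x, h x ^ 2 ∂μ - a ^ 2) := by
    have : (fun x => (m * h x - a) ^ 2) =
        fun x => m ^ 2 * h x ^ 2 - 2 * a * m * h x + a ^ 2 := by
      ext x; ring
    rw [this, integral_add (f := fun x => m ^ 2 * h x ^ 2 - 2 * a * m * h x)
      ((hi2.const_mul _).sub (hi.const_mul _)) (integrable_const _),
      integral_sub (f := fun x => m ^ 2 * h x ^ 2) (hi2.const_mul _) (hi.const_mul _),
      integral_const_mul, integral_const_mul, integral_const, smul_eq_mul]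
    ring
  nlinarith

theorem integral_sq_le_two_mul_add {f g : α → ℝ} (hf : Integrable (fun x => f x ^ 2) μ)
    (hfg : Integrable (fun x => (g x - f x) ^ 2) μ) :
    ∫ x, g x ^ 2 ∂μ ≤ 2 * ∫ x, f x ^ 2 ∂μ + 2 * ∫ x, (g x - f x) ^ 2 ∂μ := by
  rw [← integral_const_mul, ← integral_const_mul,
    ← integral_add (hf.const_mul _) (hfg.const_mul _)]
  refine integral_mono_of_nonneg (ae_of_all _ fun x => sq_nonneg _)
    ((hf.const_mul _).add (hfg.const_mul _)) (ae_of_all _ fun x => ?_)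
  nlinarith [sq_nonneg (g x - 2 * f x)]

end Integrals

section ParametricIntegrals

variable {E : Type*} [NormedAddCommGroup E] [MeasurableSpace E] [BorelSpace E]
  {μ : Measure E} [IsFiniteMeasureOnCompacts μ] {K : Set E} {a b : ℝ}
  {w : E → ℝ} {C : ℝ} {G : E → ℝ → ℝ}

theorem SpatiallySupportedIn.integrable {s : Set ℝ} (hGK : SpatiallySupportedIn G K s)
    (hK : IsCompact K) (hG : Continuous (uncurry G)) {t : ℝ} (ht : t ∈ s) :
    Integrable (fun x => G x t) μ :=
  (hG.comp (continuous_id.prodMk continuous_const)).integrable_of_hasCompactSupport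
    (hGK.hasCompactSupport hK ht)

theorem SpatiallySupportedIn.integrable_mul {s : Set ℝ} (hGK : SpatiallySupportedIn G K s)
    (hK : IsCompact K) (hG : Continuous (uncurry G)) (hw : AEStronglyMeasurable w μ)
    (hwC : ∀ x, ‖w x‖ ≤ C) {t : ℝ} (ht : t ∈ s) :
    Integrable (fun x => w x * G x t) μ :=
  (hGK.integrable hK hG ht).bdd_mul hw (ae_of_all _ hwC)

theorem SpatiallySupportedIn.continuousOn_integral_mul
    (hGK : SpatiallySupportedIn G K (Icc a b)) (hK : IsCompact K) (hG : Continuous (uncurry G))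
    (hw : AEStronglyMeasurable w μ) (hwC : ∀ x, ‖w x‖ ≤ C) :
    ContinuousOn (fun t => ∫ x, w x * G x t ∂μ) (Icc a b) := by
  obtain ⟨M, hM⟩ := (hK.prod isCompact_Icc).exists_bound_of_continuousOn hG.continuousOn
  refine continuousOn_of_dominated
    (fun t ht => (hGK.integrable_mul hK hG hw hwC ht).aestronglyMeasurable)
    (fun t ht => ae_of_all _ (hGK.norm_mul_le_indicator hM hwC ht))
    ((integrable_indicator_iff hK.measurableSet).2 (integrableOn_const hK.measure_lt_top.ne))
    (ae_of_all _ fun x => ?_)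
  exact (continuous_const.mul (hG.comp (continuous_const.prodMk continuous_id))).continuousOn

theorem SpatiallySupportedIn.hasDerivAt_integral_mul [NormedSpace ℝ E]
    (hGK : SpatiallySupportedIn G K (Icc a b)) (hK : IsCompact K)
    (hG : ContDiff ℝ 1 (uncurry G)) (hw : AEStronglyMeasurable w μ) (hwC : ∀ x, ‖w x‖ ≤ C)
    {t₀ : ℝ} (ht₀ : t₀ ∈ Ioo a b) :
    HasDerivAt (fun t => ∫ x, w x * G x t ∂μ) (∫ x, w x * _root_.timeDeriv G x t₀ ∂μ) t₀ := by
  have hG' : Continuous (uncurry (_root_.timeDeriv G)) :=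
    (ContDiff.uncurry_timeDeriv (m := 0) hG).continuous
  have hG'K := hGK.timeDeriv hG hK.isClosed (ht₀.1.trans ht₀.2)
  obtain ⟨M, hM⟩ := (hK.prod isCompact_Icc).exists_bound_of_continuousOn hG'.continuousOn
  refine (hasDerivAt_integral_of_dominated_loc_of_deriv_le (Icc_mem_nhds ht₀.1 ht₀.2)
    (Eventually.of_forall fun t => ?_)
    (hGK.integrable_mul hK hG.continuous hw hwC (Ioo_subset_Icc_self ht₀))
    (hG'K.integrable_mul hK hG' hw hwC (Ioo_subset_Icc_self ht₀)).aestronglyMeasurable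
    (ae_of_all _ fun x t ht => hG'K.norm_mul_le_indicator hM hwC ht x)
    ((integrable_indicator_iff hK.measurableSet).2 (integrableOn_const hK.measure_lt_top.ne))
    (ae_of_all _ fun x t _ =>
      (hasDerivAt_timeDeriv (hG.differentiable one_ne_zero) x t).const_mul (w x))).2
  exact hw.mul (hG.continuous.comp (continuous_id.prodMk continuous_const)).aestronglyMeasurable

theorem SpatiallySupportedIn.integral_sq_sub_le [NormedSpace ℝ E] [SFinite μ] {y : E → ℝ → ℝ}
    (hyK : SpatiallySupportedIn y K (Icc a b)) (hK : IsCompact K)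
    (hy : ContDiff ℝ 1 (uncurry y)) (hab : a < b) {B : ℝ}
    (hB : ∀ s ∈ Icc a b, ∫ x, _root_.timeDeriv y x s ^ 2 ∂μ ≤ B) {t : ℝ} (ht : t ∈ Icc a b) :
    ∫ x, (y x t - y x a) ^ 2 ∂μ ≤ (t - a) ^ 2 * B := by
  set u := _root_.timeDeriv y
  have hu : Continuous (uncurry u) := (ContDiff.uncurry_timeDeriv (m := 0) hy).continuous
  have huK := hyK.timeDeriv hy hK.isClosed hab
  have hIoc : Ioc a t ⊆ Icc a b := Ioc_subset_Icc_self.trans (Icc_subset_Icc_right ht.2)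
  set ν := volume.restrict (Ioc a t)
  have hν : ν.real univ = t - a := by simp [ν, ht.1]
  have hftc : ∀ x, y x t - y x a = ∫ s, u x s ∂ν := fun x => by
    rw [← intervalIntegral.integral_of_le ht.1, intervalIntegral.integral_eq_sub_of_hasDerivAt
      (fun s _ => hasDerivAt_timeDeriv (hy.differentiable one_ne_zero) x s)
      ((hu.comp (continuous_const.prodMk continuous_id)).intervalIntegrable _ _)]
  have hcs : ∀ x, (y x t - y x a) ^ 2 ≤ (t - a) * ∫ s, u x s ^ 2 ∂ν := fun x => by
    have hux : Continuous (u x) := hu.comp (continuous_const.prodMk continuous_id)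
    rw [hftc x, ← hν]
    exact sq_integral_le_measureReal_mul_integral_sq hux.integrableOn_Ioc
      (hux.pow 2).integrableOn_Ioc
  have hint : Integrable (uncurry fun x s => u x s ^ 2) (μ.prod ν) := by
    rw [← Measure.restrict_univ (μ := μ), Measure.prod_restrict, ← IntegrableOn]
    refine ((hu.pow 2).continuousOn.integrableOn_compact
      (hK.prod (isCompact_Icc (a := a) (b := t)))).of_forall_sdiff_eq_zero
      (MeasurableSet.univ.prod measurableSet_Ioc) fun p ⟨⟨_, hp⟩, hpK⟩ => ?_
    have hx : p.1 ∉ K := fun hx => hpK ⟨hx, Ioc_subset_Icc_self hp⟩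
    simp [uncurry, u, huK p.1 hx p.2 (hIoc hp)]
  calc ∫ x, (y x t - y x a) ^ 2 ∂μ ≤ ∫ x, (t - a) * ∫ s, u x s ^ 2 ∂ν ∂μ :=
        integral_mono_of_nonneg (ae_of_all _ fun x => sq_nonneg _)
          (hint.integral_prod_left.const_mul _) (ae_of_all _ hcs)
    _ = (t - a) * ∫ s, ∫ x, u x s ^ 2 ∂μ ∂ν := by
        rw [integral_const_mul, integral_integral_swap hint]
    _ ≤ (t - a) * ∫ _ : ℝ, B ∂ν := by
        refine mul_le_mul_of_nonneg_left (integral_mono_ae hint.integral_prod_right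
          (integrable_const B) ?_) (sub_nonneg.2 ht.1)
        filter_upwards [ae_restrict_mem measurableSet_Ioc] with s hs using hB s (hIoc hs)
    _ = (t - a) ^ 2 * B := by
        rw [integral_const, smul_eq_mul, hν]
        ring

end ParametricIntegrals

theorem integral_mul_fderiv_eq_neg_fderiv_mul_of_hasCompactSupport {E : Type*}
    [NormedAddCommGroup E] [NormedSpace ℝ E] [MeasurableSpace E] [BorelSpace E]
    [FiniteDimensional ℝ E] {μ : Measure E} [μ.IsAddHaarMeasure] {f g : E → ℝ}
    (hf : ContDiff ℝ 1 f) (hg : ContDiff ℝ 1 g) (hfc : HasCompactSupport f) (v : E) :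
    ∫ x, f x * fderiv ℝ g x v ∂μ = -∫ x, fderiv ℝ f x v * g x ∂μ := by
  have hf' : Continuous fun x => fderiv ℝ f x v :=
    (hf.continuous_fderiv one_ne_zero).clm_apply continuous_const
  have hg' : Continuous fun x => fderiv ℝ g x v :=
    (hg.continuous_fderiv one_ne_zero).clm_apply continuous_const
  exact integral_mul_fderiv_eq_neg_fderiv_mul_of_integrable
    ((hf'.mul hg.continuous).integrable_of_hasCompactSupport
      (hfc.fderiv_apply (𝕜 := ℝ) v).mul_right)
    ((hf.continuous.mul hg').integrable_of_hasCompactSupport hfc.mul_right)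
    ((hf.continuous.mul hg.continuous).integrable_of_hasCompactSupport hfc.mul_right)
    (fun x _ => hf.differentiable one_ne_zero x) (fun x _ => hg.differentiable one_ne_zero x)

theorem norm_gradient_sq_eq_sum {ι : Type*} [Fintype ι] [DecidableEq ι]
    (u : EuclideanSpace ℝ ι → ℝ) (x : EuclideanSpace ℝ ι) :
    ‖gradient u x‖ ^ 2 = ∑ i, fderiv ℝ u x (EuclideanSpace.single i 1) ^ 2 := by
  rw [EuclideanSpace.norm_sq_eq]
  refine Finset.sum_congr rfl fun i _ => ?_
  rw [Real.norm_eq_abs, sq_abs, gradient, ← InnerProductSpace.toDual_symm_apply,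
    EuclideanSpace.inner_single_right]
  simp

noncomputable section WaveEnergy

variable {n : ℕ}

def waveEnergy (ρ : EuclideanSpace ℝ (Fin n) → ℝ) (y : EuclideanSpace ℝ (Fin n) → ℝ → ℝ)
    (t : ℝ) : ℝ :=
  (∫ x, ρ x * timeDeriv y x t ^ 2) + ∑ i, ∫ x, spaceDeriv y (EuclideanSpace.single i 1) x t ^ 2

variable {ρ : EuclideanSpace ℝ (Fin n) → ℝ} {C : ℝ} {y : EuclideanSpace ℝ (Fin n) → ℝ → ℝ}
  {K : Set (EuclideanSpace ℝ (Fin n))} {a b : ℝ}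

theorem hasDerivAt_waveEnergy (hρ : AEStronglyMeasurable ρ volume) (hρC : ∀ x, ‖ρ x‖ ≤ C)
    (hy : ContDiff ℝ 2 (uncurry y)) (hK : IsCompact K)
    (hyK : SpatiallySupportedIn y K (Icc a b)) {t₀ : ℝ} (ht₀ : t₀ ∈ Ioo a b) :
    HasDerivAt (waveEnergy ρ y)
      (2 * (∫ x, ρ x * (timeDeriv y x t₀ * timeDeriv (timeDeriv y) x t₀)) +
        ∑ i, 2 * ∫ x, spaceDeriv y (EuclideanSpace.single i 1) x t₀ *
          timeDeriv (spaceDeriv y (EuclideanSpace.single i 1)) x t₀) t₀ := by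
  have hab : a < b := ht₀.1.trans ht₀.2
  have hy2 : ContDiff ℝ (1 + 1) (uncurry y) := by simpa [one_add_one_eq_two] using hy
  have hy1 : ContDiff ℝ 1 (uncurry y) := hy.of_le one_le_two
  have hyt := hy2.uncurry_timeDeriv
  have hyi := hy2.uncurry_spaceDeriv
  have htime := ((hyK.timeDeriv hy1 hK.isClosed hab).pow two_ne_zero).hasDerivAt_integral_mul
    (μ := volume) hK (hyt.pow 2) hρ hρC ht₀
  have hspace := fun i => ((hyK.spaceDeriv hy1 hK.isClosed hab (EuclideanSpace.single i 1)).pow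
    two_ne_zero).hasDerivAt_integral_mul (μ := volume) hK ((hyi _).pow 2)
    (aestronglyMeasurable_const (b := 1)) (C := 1) (by simp) ht₀
  simp only [one_mul] at hspace
  refine (htime.fun_add (HasDerivAt.fun_sum fun i _ => hspace i)).congr_deriv ?_
  simp only [timeDeriv_sq (hyt.differentiable one_ne_zero),
    timeDeriv_sq ((hyi _).differentiable one_ne_zero), ← integral_const_mul]
  congr 2
  ext x
  ring

theorem hasDerivAt_waveEnergy_eq_zero (hρ : AEStronglyMeasurable ρ volume)
    (hρC : ∀ x, ‖ρ x‖ ≤ C) (hy : ContDiff ℝ 2 (uncurry y)) (hK : IsCompact K)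
    (hyK : SpatiallySupportedIn y K (Icc a b))
    (hwave : ∀ x, ∀ t ∈ Ioo a b,
      ρ x * timeDeriv (timeDeriv y) x t = spatialLaplacian (fun x' => y x' t) x)
    {t₀ : ℝ} (ht₀ : t₀ ∈ Ioo a b) :
    HasDerivAt (waveEnergy ρ y) 0 t₀ := by
  refine (hasDerivAt_waveEnergy hρ hρC hy hK hyK ht₀).congr_deriv ?_
  have hy2 : ContDiff ℝ (1 + 1) (uncurry y) := by simpa [one_add_one_eq_two] using hy
  have hslice : ∀ {u : EuclideanSpace ℝ (Fin n) → ℝ → ℝ}, ContDiff ℝ 1 (uncurry u) →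
      ContDiff ℝ 1 fun x => u x t₀ := fun hu => hu.comp (contDiff_id.prodMk contDiff_const)
  have hyt : ContDiff ℝ 1 fun x => timeDeriv y x t₀ := hslice hy2.uncurry_timeDeriv
  have hyi : ∀ v, ContDiff ℝ 1 fun x => spaceDeriv y v x t₀ :=
    fun v => hslice (hy2.uncurry_spaceDeriv v)
  have hytK : HasCompactSupport fun x => timeDeriv y x t₀ :=
    (hyK.timeDeriv (hy.of_le one_le_two) hK.isClosed (ht₀.1.trans ht₀.2)).hasCompactSupport hK
      (Ioo_subset_Icc_self ht₀)
  have hibp : ∀ v, ∫ x, timeDeriv y x t₀ * spaceDeriv (spaceDeriv y v) v x t₀ =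
      -∫ x, spaceDeriv y v x t₀ * timeDeriv (spaceDeriv y v) x t₀ := fun v => by
    rw [timeDeriv_spaceDeriv_comm hy]
    simp_rw [mul_comm (spaceDeriv y v _ t₀)]
    exact integral_mul_fderiv_eq_neg_fderiv_mul_of_hasCompactSupport hyt (hyi v) hytK v
  have hflux : ∫ x, ρ x * (timeDeriv y x t₀ * timeDeriv (timeDeriv y) x t₀) =
      ∑ i, ∫ x, timeDeriv y x t₀ * spaceDeriv (spaceDeriv y (EuclideanSpace.single i 1))
        (EuclideanSpace.single i 1) x t₀ := by
    have hint : ∀ v, Integrable fun x => timeDeriv y x t₀ * spaceDeriv (spaceDeriv y v) v x t₀ :=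
      fun v => (hyt.continuous.mul (((hyi v).continuous_fderiv one_ne_zero).clm_apply
        continuous_const)).integrable_of_hasCompactSupport hytK.mul_right
    rw [← integral_finsetSum _ fun i _ => hint _]
    congr 1; ext x
    rw [mul_left_comm, hwave x t₀ ht₀, spatialLaplacian, Finset.mul_sum]
    rfl
  rw [hflux, Finset.mul_sum, ← Finset.sum_add_distrib]
  simp [hibp]

theorem continuousOn_waveEnergy (hρ : AEStronglyMeasurable ρ volume) (hρC : ∀ x, ‖ρ x‖ ≤ C)
    (hy : ContDiff ℝ 1 (uncurry y)) (hK : IsCompact K)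
    (hyK : SpatiallySupportedIn y K (Icc a b)) (hab : a < b) :
    ContinuousOn (waveEnergy ρ y) (Icc a b) := by
  have hyt := (ContDiff.uncurry_timeDeriv (m := 0) hy).continuous
  have hyi := fun v => (ContDiff.uncurry_spaceDeriv (m := 0) hy v).continuous
  refine (((hyK.timeDeriv hy hK.isClosed hab).pow two_ne_zero).continuousOn_integral_mul hK
    (hyt.pow 2) hρ hρC).add (continuousOn_finsetSum _ fun i _ => ?_)
  simpa using ((hyK.spaceDeriv hy hK.isClosed hab _).pow two_ne_zero).continuousOn_integral_mul
    (μ := volume) hK ((hyi (EuclideanSpace.single i 1)).pow 2) aestronglyMeasurable_const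
    (C := 1) (w := 1) (by simp)

theorem waveEnergy_eq_of_mem_Icc (hρ : AEStronglyMeasurable ρ volume) (hρC : ∀ x, ‖ρ x‖ ≤ C)
    (hy : ContDiff ℝ 2 (uncurry y)) (hK : IsCompact K)
    (hyK : SpatiallySupportedIn y K (Icc a b))
    (hwave : ∀ x, ∀ t ∈ Ioo a b,
      ρ x * timeDeriv (timeDeriv y) x t = spatialLaplacian (fun x' => y x' t) x)
    {t : ℝ} (ht : t ∈ Icc a b) :
    waveEnergy ρ y t = waveEnergy ρ y a := by
  rcases ht.1.eq_or_lt with rfl | hat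
  · rfl
  obtain ⟨s, -, hs⟩ := exists_hasDerivAt_eq_slope (waveEnergy ρ y) (fun _ => 0) hat
    ((continuousOn_waveEnergy hρ hρC (hy.of_le one_le_two) hK hyK (hat.trans_le ht.2)).mono
      (Icc_subset_Icc_right ht.2))
    fun s hs => hasDerivAt_waveEnergy_eq_zero hρ hρC hy hK hyK hwave ⟨hs.1, hs.2.trans_le ht.2⟩
  rw [eq_comm, div_eq_zero_iff, sub_eq_zero] at hs
  exact hs.resolve_right (sub_ne_zero.2 hat.ne')

theorem integrable_spaceDeriv_sq (hy : ContDiff ℝ 1 (uncurry y)) (hK : IsCompact K)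
    (hyK : SpatiallySupportedIn y K (Icc a b)) (hab : a < b) (v : EuclideanSpace ℝ (Fin n))
    {t : ℝ} (ht : t ∈ Icc a b) :
    Integrable fun x => spaceDeriv y v x t ^ 2 :=
  ((hyK.spaceDeriv hy hK.isClosed hab v).pow two_ne_zero).integrable hK
    ((ContDiff.uncurry_spaceDeriv (m := 0) hy v).continuous.pow 2) ht

theorem integral_norm_gradient_sq_eq_sum (hy : ContDiff ℝ 1 (uncurry y)) (hK : IsCompact K)
    (hyK : SpatiallySupportedIn y K (Icc a b)) (hab : a < b) {t : ℝ} (ht : t ∈ Icc a b) :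
    ∫ x, ‖gradient (fun x' => y x' t) x‖ ^ 2 =
      ∑ i, ∫ x, spaceDeriv y (EuclideanSpace.single i 1) x t ^ 2 := by
  simp_rw [norm_gradient_sq_eq_sum]
  exact integral_finsetSum _ fun i _ => integrable_spaceDeriv_sq hy hK hyK hab _ ht

theorem integral_sq_add_norm_gradient_sq (hy : ContDiff ℝ 1 (uncurry y)) (hK : IsCompact K)
    (hyK : SpatiallySupportedIn y K (Icc a b)) (hab : a < b) {t : ℝ} (ht : t ∈ Icc a b) :
    ∫ x, (y x t ^ 2 + ‖gradient (fun x' => y x' t) x‖ ^ 2) =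
      (∫ x, y x t ^ 2) + ∫ x, ‖gradient (fun x' => y x' t) x‖ ^ 2 := by
  refine integral_add ((hyK.pow two_ne_zero).integrable hK (hy.continuous.pow 2) ht) ?_
  simp_rw [norm_gradient_sq_eq_sum]
  exact integrable_finsetSum _ fun i _ => integrable_spaceDeriv_sq hy hK hyK hab _ ht

theorem waveEnergy_eq_integral_norm_gradient_sq (hy : ContDiff ℝ 1 (uncurry y))
    (hK : IsCompact K) (hyK : SpatiallySupportedIn y K (Icc a b)) (hab : a < b) {t : ℝ}
    (ht : t ∈ Icc a b) (hrest : ∀ x, timeDeriv y x t = 0) :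
    waveEnergy ρ y t = ∫ x, ‖gradient (fun x' => y x' t) x‖ ^ 2 := by
  simp [waveEnergy, hrest, integral_norm_gradient_sq_eq_sum hy hK hyK hab ht]

theorem sum_integral_spaceDeriv_sq_le_waveEnergy (hρ : ∀ x, 0 ≤ ρ x) (t : ℝ) :
    ∑ i, ∫ x, spaceDeriv y (EuclideanSpace.single i 1) x t ^ 2 ≤ waveEnergy ρ y t :=
  le_add_of_nonneg_left (integral_nonneg fun x => mul_nonneg (hρ x) (sq_nonneg _))

theorem integral_timeDeriv_sq_le_waveEnergy {m : ℝ} (hm : 0 < m) (hρm : ∀ x, m ≤ ρ x) {t : ℝ}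
    (hint : Integrable fun x => ρ x * timeDeriv y x t ^ 2) :
    ∫ x, timeDeriv y x t ^ 2 ≤ m⁻¹ * waveEnergy ρ y t := by
  have hρ : ∫ x, timeDeriv y x t ^ 2 ≤ m⁻¹ * ∫ x, ρ x * timeDeriv y x t ^ 2 := by
    rw [← integral_const_mul]
    refine integral_mono_of_nonneg (ae_of_all _ fun x => sq_nonneg _) (hint.const_mul _)
      (ae_of_all _ fun x => ?_)
    dsimp only
    rw [← mul_assoc, ← div_eq_inv_mul]
    exact le_mul_of_one_le_left (sq_nonneg _) ((one_le_div hm).2 (hρm x))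
  have hgrad : 0 ≤ ∑ i, ∫ x, spaceDeriv y (EuclideanSpace.single i 1) x t ^ 2 :=
    Finset.sum_nonneg fun i _ => integral_nonneg fun x => sq_nonneg _
  rw [waveEnergy, mul_add]
  linarith [mul_nonneg (inv_nonneg.2 hm.le) hgrad]

theorem integral_sq_add_norm_gradient_sq_le_waveEnergy (hρ : AEStronglyMeasurable ρ volume)
    (hρC : ∀ x, ‖ρ x‖ ≤ C) {m : ℝ} (hm : 0 < m) (hρm : ∀ x, m ≤ ρ x)
    (hy : ContDiff ℝ 2 (uncurry y)) (hK : IsCompact K)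
    (hyK : SpatiallySupportedIn y K (Icc a b))
    (hwave : ∀ x, ∀ t ∈ Ioo a b,
      ρ x * timeDeriv (timeDeriv y) x t = spatialLaplacian (fun x' => y x' t) x)
    (hab : a < b) {t : ℝ} (ht : t ∈ Icc a b) :
    ∫ x, (y x t ^ 2 + ‖gradient (fun x' => y x' t) x‖ ^ 2) ≤
      2 * (∫ x, y x a ^ 2) + 2 * ((t - a) ^ 2 * m⁻¹ * waveEnergy ρ y a) + waveEnergy ρ y a := by
  have hy1 : ContDiff ℝ 1 (uncurry y) := hy.of_le one_le_two
  have hconst := fun s (hs : s ∈ Icc a b) => waveEnergy_eq_of_mem_Icc hρ hρC hy hK hyK hwave hs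
  have hyt : ∀ s ∈ Icc a b, ∫ x, timeDeriv y x s ^ 2 ≤ m⁻¹ * waveEnergy ρ y a := fun s hs => by
    rw [← hconst s hs]
    exact integral_timeDeriv_sq_le_waveEnergy hm hρm (((hyK.timeDeriv hy1 hK.isClosed hab).pow
      two_ne_zero).integrable_mul hK ((ContDiff.uncurry_timeDeriv (m := 0) hy1).continuous.pow 2)
      hρ hρC hs)
  have hgrad : ∫ x, ‖gradient (fun x' => y x' t) x‖ ^ 2 ≤ waveEnergy ρ y a := by
    rw [integral_norm_gradient_sq_eq_sum hy1 hK hyK hab ht, ← hconst t ht]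
    exact sum_integral_spaceDeriv_sq_le_waveEnergy (fun x => hm.le.trans (hρm x)) t
  have hdiff : SpatiallySupportedIn (fun x s => (y x s - y x a) ^ 2) K (Icc a b) :=
    fun x hx s hs => by simp [hyK x hx s hs, hyK x hx a (left_mem_Icc.2 hab.le)]
  have hsq : ∫ x, y x t ^ 2 ≤ 2 * (∫ x, y x a ^ 2) + 2 * ∫ x, (y x t - y x a) ^ 2 :=
    integral_sq_le_two_mul_add ((hyK.pow two_ne_zero).integrable hK (hy1.continuous.pow 2)
      (left_mem_Icc.2 hab.le)) (hdiff.integrable hK (by fun_prop) ht)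
  rw [integral_sq_add_norm_gradient_sq hy1 hK hyK hab ht, mul_assoc _ m⁻¹]
  gcongr
  exact hsq.trans (by gcongr; exact hyK.integral_sq_sub_le hK hy1 hab hyt ht)

end WaveEnergy

theorem two_mul_add_two_mul_add_le_of_poincare {C₀ I J k m : ℝ} (hC₀ : 0 < C₀) (hI : 0 ≤ I)
    (hJ : 0 ≤ J) (hP : C₀ ^ 2 * (J + I) ≤ I) (hkm : k ≤ m) (hm : 1 ≤ m) :
    2 * J + 2 * (k * I) + I ≤ (1 + 2 / C₀ ^ 2 * m) * I := by
  have hC : 0 < C₀ ^ 2 := by positivity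
  have hslack : 0 ≤ (1 - C₀ ^ 2) * I := by nlinarith [mul_nonneg hC.le hJ]
  have hkey : C₀ ^ 2 * (2 * J + 2 * (k * I)) ≤ 2 * m * I := by
    nlinarith [mul_nonneg (sub_nonneg.2 hm) hslack, mul_le_mul_of_nonneg_right hkm hI,
      mul_le_mul_of_nonneg_left (mul_le_mul_of_nonneg_right hkm hI) hC.le]
  calc 2 * J + 2 * (k * I) + I ≤ 2 * m * I / C₀ ^ 2 + I := by
        gcongr
        rwa [le_div_iff₀' hC]
    _ = (1 + 2 / C₀ ^ 2 * m) * I := by ring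

theorem stmt_3_general
    {n : ℕ}
    (c : EuclideanSpace ℝ (Fin n) → ℝ) (hc_meas : Measurable c)
    (c_min c_max : ℝ) (hc_min_pos : 0 < c_min)
    (hc : ∀ x, c_min ≤ c x ∧ c x ≤ c_max)
    (T : ℝ) (hT : 0 < T)
    (f : EuclideanSpace ℝ (Fin n) → ℝ)
    (y : EuclideanSpace ℝ (Fin n) → ℝ → ℝ)
    (hy : ContDiff ℝ 2 (fun p : EuclideanSpace ℝ (Fin n) × ℝ => y p.1 p.2))
    (K : Set (EuclideanSpace ℝ (Fin n))) (hK : IsCompact K)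
    (hyK : ∀ x ∉ K, ∀ t ∈ Set.Icc (0:ℝ) T, y x t = 0)
    (hwave : ∀ x, ∀ t ∈ Set.Ioo (0:ℝ) T,
      ((c x) ^ 2)⁻¹ * deriv (deriv (y x)) t = spatialLaplacian (fun x' => y x' t) x)
    (hinit : ∀ x, y x 0 = f x)
    (hinit' : ∀ x, deriv (y x) 0 = 0)
    (C₀ : ℝ) (hC₀ : 0 < C₀)
    (hPoincare : C₀ ^ 2 * (∫ x, ((f x) ^ 2 + ‖gradient f x‖ ^ 2)) ≤ ∫ x, ‖gradient f x‖ ^ 2) :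
    ∀ t ∈ Set.Icc (0:ℝ) T,
      (∫ x, ((y x t) ^ 2 + ‖gradient (fun x' => y x' t) x‖ ^ 2))
        ≤ (1 + 2 / C₀ ^ 2 * max 1 (c_max ^ 2 * T ^ 2)) * ∫ x, ‖gradient f x‖ ^ 2 := by
  intro t ht
  obtain rfl : f = fun x => y x 0 := funext fun x => (hinit x).symm
  have hyK : SpatiallySupportedIn y K (Icc 0 T) := hyK
  have hy1 : ContDiff ℝ 1 (uncurry y) := hy.of_le one_le_two
  have h0 : (0 : ℝ) ∈ Icc 0 T := left_mem_Icc.2 hT.le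
  have hc_pos : ∀ x, 0 < c x := fun x => hc_min_pos.trans_le (hc x).1
  set ρ := fun x => ((c x) ^ 2)⁻¹
  have hρC : ∀ x, ‖ρ x‖ ≤ (c_min ^ 2)⁻¹ := fun x => by
    rw [Real.norm_of_nonneg (by positivity [hc_pos x])]
    exact inv_anti₀ (by positivity) (pow_le_pow_left₀ hc_min_pos.le (hc x).1 2)
  have hρm : ∀ x, (c_max ^ 2)⁻¹ ≤ ρ x := fun x =>
    inv_anti₀ (by positivity [hc_pos x]) (pow_le_pow_left₀ (hc_pos x).le (hc x).2 2)
  have hE : waveEnergy ρ y 0 = ∫ x, ‖gradient (fun x' => y x' 0) x‖ ^ 2 :=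
    waveEnergy_eq_integral_norm_gradient_sq hy1 hK hyK hT h0 hinit'
  rw [integral_sq_add_norm_gradient_sq hy1 hK hyK hT h0, ← hE] at hPoincare
  rw [← hE]
  refine (integral_sq_add_norm_gradient_sq_le_waveEnergy
    (hc_meas.pow_const 2).inv.aestronglyMeasurable hρC
    (inv_pos.2 (pow_pos ((hc_pos 0).trans_le (hc 0).2) 2)) hρm hy hK hyK hwave hT ht).trans
    (two_mul_add_two_mul_add_le_of_poincare hC₀ (hE ▸ integral_nonneg fun x => sq_nonneg _)
      (integral_nonneg fun x => sq_nonneg _) hPoincare (le_max_of_le_right ?_) (le_max_left _ _))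
  rw [sub_zero, inv_inv, mul_comm]
  gcongr
  exacts [ht.1, ht.2]

theorem stmt_3
    {n : ℕ} (hn : 1 ≤ n)
    (c : EuclideanSpace ℝ (Fin n) → ℝ) (hc_meas : Measurable c)
    (c_min c_max : ℝ) (hc_min_pos : 0 < c_min)
    (hc : ∀ x, c_min ≤ c x ∧ c x ≤ c_max)
    (T : ℝ) (hT : 0 < T)
    (f : EuclideanSpace ℝ (Fin n) → ℝ)
    (hf : ContDiff ℝ 2 f) (hf_supp : HasCompactSupport f)
    (y : EuclideanSpace ℝ (Fin n) → ℝ → ℝ)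
    (hy : ContDiff ℝ 2 (fun p : EuclideanSpace ℝ (Fin n) × ℝ => y p.1 p.2))
    (K : Set (EuclideanSpace ℝ (Fin n))) (hK : IsCompact K)
    (hyK : ∀ x ∉ K, ∀ t ∈ Set.Icc (0:ℝ) T, y x t = 0)
    (hwave : ∀ x, ∀ t ∈ Set.Ioo (0:ℝ) T,
      ((c x) ^ 2)⁻¹ * deriv (deriv (y x)) t = spatialLaplacian (fun x' => y x' t) x)
    (hinit : ∀ x, y x 0 = f x)
    (hinit' : ∀ x, deriv (y x) 0 = 0)
    (C₀ : ℝ) (hC₀ : 0 < C₀)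
    (hPoincare : C₀ ^ 2 * (∫ x, ((f x) ^ 2 + ‖gradient f x‖ ^ 2)) ≤ ∫ x, ‖gradient f x‖ ^ 2) :
    ∀ t ∈ Set.Icc (0:ℝ) T,
      (∫ x, ((y x t) ^ 2 + ‖gradient (fun x' => y x' t) x‖ ^ 2))
        ≤ (1 + 2 / C₀ ^ 2 * max 1 (c_max ^ 2 * T ^ 2)) * ∫ x, ‖gradient f x‖ ^ 2 :=
  stmt_3_general c hc_meas c_min c_max hc_min_pos hc T hT f y hy K hK hyK hwave hinit hinit' C₀ hC₀
    hPoincare
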